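/- arXiv:2406.18700 — 3 statements merged into one kernel-verified Lean document; each statement's English description precedes it below -/
import Mathlib

section
/- Let p be an odd prime, k a positive integer, and g ∈ ℤ[X] a polynomial with g(ω_p) ≠ 0 whose coefficient absolute values sum to at most p^k (i.e., the ℓ₁ norm of the coefficient vector |g|₁ ≤ p^k). Then |g(ω_p)/p^k| ≥ 1/p^{k(p−1)/2}. -/
/-!
Let `x = g(ζ)` in `K = ℚ(ζ)`, an algebraic integer. Its norm is a nonzero rational integer, so the
product of `|σ x|` over the `φ(n)` embeddings `σ : K → ℂ` is at least `1`. Every factor is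
`|g(ζ')|` for a root of unity `ζ'`, hence at most `|g|₁`; and for `n > 2` the embedding `ζ ↦ ζ` and
its complex conjugate are distinct but give the same factor `|g(ζ)|`. Thus
`1 ≤ |g(ζ)|² |g|₁^(φ(n) - 2)`, which for `n = p` and `|g|₁ ≤ p^k` is the claim.
-/

open Polynomial IntermediateField Module

theorem IsPrimitiveRoot.conj_ne_self {ζ : ℂ} {n : ℕ} (hζ : IsPrimitiveRoot ζ n) (hn : 2 < n) :
    starRingEnd ℂ ζ ≠ ζ := by
  intro hconj
  obtain ⟨r, rfl⟩ := Complex.conj_eq_iff_real.mp hconj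
  have hr : |r| = 1 := by simpa using hζ.norm'_eq_one (by omega)
  have hsq : (r : ℂ) ^ 2 = 1 := by
    rw [← Complex.ofReal_pow, ← sq_abs, hr, one_pow, Complex.ofReal_one]
  exact absurd (Nat.le_of_dvd two_pos ((hζ.pow_eq_one_iff_dvd 2).mp hsq)) (by omega)

theorem IsPrimitiveRoot.finrank_rat_adjoin {K : Type*} [Field K] [CharZero K] {ζ : K} {n : ℕ}
    (hζ : IsPrimitiveRoot ζ n) (hn : 0 < n) : finrank ℚ ℚ⟮ζ⟯ = n.totient := by
  rw [adjoin.finrank (hζ.isIntegral hn).tower_top, ← cyclotomic_eq_minpoly_rat hζ hn,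
    natDegree_cyclotomic]

theorem Polynomial.norm_aeval_le_sum_abs_coeff {z : ℂ} (hz : ‖z‖ ≤ 1) (g : ℤ[X]) :
    ‖aeval z g‖ ≤ ∑ i ∈ g.support, (|g.coeff i| : ℝ) := by
  rw [aeval_def, eval₂_eq_sum, Polynomial.sum]
  refine (norm_sum_le _ _).trans (Finset.sum_le_sum fun i _ => ?_)
  rw [norm_mul, norm_pow, algebraMap_int_eq, eq_intCast, Complex.norm_intCast]
  exact mul_le_of_le_one_right (abs_nonneg _) (pow_le_one₀ (norm_nonneg z) hz)

theorem one_le_prod_norm_embeddings {K : Type*} [Field K] [Algebra ℚ K] [FiniteDimensional ℚ K]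
    {x : K} (hx : IsIntegral ℤ x) (hx0 : x ≠ 0) : 1 ≤ ∏ σ : K →ₐ[ℚ] ℂ, ‖σ x‖ := by
  obtain ⟨m, hm⟩ := IsIntegrallyClosed.isIntegral_iff.mp (Algebra.isIntegral_norm ℚ hx)
  have hm0 : m ≠ 0 := by
    rintro rfl
    exact hx0 (by simpa using hm.symm)
  rw [← Complex.norm_prod, ← Algebra.norm_eq_prod_embeddings, ← hm]
  simpa using (by exact_mod_cast Int.one_le_abs hm0 : (1 : ℝ) ≤ |m|)

theorem Finset.one_le_sq_mul_pow_of_one_le_prod {ι : Type*} [DecidableEq ι] {s : Finset ι}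
    {f : ι → ℝ} {a b : ι} {B : ℝ} (ha : a ∈ s) (hb : b ∈ s) (hab : b ≠ a) (hfab : f b = f a)
    (hf0 : ∀ i ∈ s, 0 ≤ f i) (hfB : ∀ i ∈ s, f i ≤ B) (h : 1 ≤ ∏ i ∈ s, f i) :
    1 ≤ f a ^ 2 * B ^ (s.card - 2) := by
  have hb' : b ∈ s.erase a := mem_erase.mpr ⟨hab, hb⟩
  have hrest : ∏ i ∈ (s.erase a).erase b, f i ≤ B ^ (s.card - 2) := by
    have hcard : ((s.erase a).erase b).card = s.card - 2 := by
      rw [card_erase_of_mem hb', card_erase_of_mem ha, Nat.sub_sub]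
    rw [← hcard, ← prod_const]
    exact prod_le_prod (fun i hi => hf0 i (mem_of_mem_erase (mem_of_mem_erase hi)))
      (fun i hi => hfB i (mem_of_mem_erase (mem_of_mem_erase hi)))
  rw [← mul_prod_erase s f ha, ← mul_prod_erase _ f hb', hfab, ← mul_assoc, ← sq] at h
  exact h.trans (by gcongr)

theorem one_le_norm_sq_mul_pow_of_conj_ne {K : Type*} [Field K] [Algebra ℚ K]
    [FiniteDimensional ℚ K] {x : K} (hx : IsIntegral ℤ x) (hx0 : x ≠ 0) {σ₀ : K →ₐ[ℚ] ℂ}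
    (hσ₀ : (Complex.conjAe.toAlgHom.restrictScalars ℚ).comp σ₀ ≠ σ₀) {B : ℝ}
    (hB : ∀ σ : K →ₐ[ℚ] ℂ, ‖σ x‖ ≤ B) :
    1 ≤ ‖σ₀ x‖ ^ 2 * B ^ (finrank ℚ K - 2) := by
  classical
  rw [← AlgHom.card ℚ K ℂ, ← Finset.card_univ]
  exact Finset.one_le_sq_mul_pow_of_one_le_prod (f := fun σ => ‖σ x‖) (Finset.mem_univ σ₀)
    (Finset.mem_univ _) hσ₀ (Complex.norm_conj _) (fun σ _ => norm_nonneg _) (fun σ _ => hB σ)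
    (one_le_prod_norm_embeddings hx hx0)

theorem IsPrimitiveRoot.one_le_norm_aeval_sq_mul_pow {ζ : ℂ} {n : ℕ}
    (hζ : IsPrimitiveRoot ζ n) (hn : 2 < n) {g : ℤ[X]} (hg : aeval ζ g ≠ 0) :
    1 ≤ ‖aeval ζ g‖ ^ 2 * (∑ i ∈ g.support, (|g.coeff i| : ℝ)) ^ (n.totient - 2) := by
  have hn0 : 0 < n := by omega
  have : FiniteDimensional ℚ ℚ⟮ζ⟯ := adjoin.finiteDimensional (hζ.isIntegral hn0).tower_top
  set z := AdjoinSimple.gen ℚ ζ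
  have hz : IsPrimitiveRoot z n := hζ.of_map_of_injective (f := ℚ⟮ζ⟯.val) Subtype.val_injective
  have hσ (σ : ℚ⟮ζ⟯ →ₐ[ℚ] ℂ) : σ (aeval z g) = aeval (σ z) g :=
    (aeval_algHom_apply (σ.restrictScalars ℤ) z g).symm
  have hx : IsIntegral ℤ (aeval z g) :=
    .of_mem_of_fg _ (hz.isIntegral hn0).fg_adjoin_singleton _ (aeval_mem_adjoin_singleton _ _)
  have hval : aeval ζ g = ℚ⟮ζ⟯.val (aeval z g) := (hσ ℚ⟮ζ⟯.val).symm
  have hx0 : aeval z g ≠ 0 := fun h => hg (by rw [hval, h, map_zero])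
  have hconj : (Complex.conjAe.toAlgHom.restrictScalars ℚ).comp ℚ⟮ζ⟯.val ≠ ℚ⟮ζ⟯.val :=
    fun h => hζ.conj_ne_self hn (DFunLike.congr_fun h z)
  have hB (σ : ℚ⟮ζ⟯ →ₐ[ℚ] ℂ) : ‖σ (aeval z g)‖ ≤ ∑ i ∈ g.support, (|g.coeff i| : ℝ) := by
    rw [hσ]
    exact norm_aeval_le_sum_abs_coeff ((hz.map_of_injective σ.injective).norm'_eq_one hn0.ne').le g
  have key := one_le_norm_sq_mul_pow_of_conj_ne hx hx0 hconj hB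
  rwa [← hval, finrank_rat_adjoin hζ hn0] at key

theorem one_div_pow_succ_le_div_of_one_le_sq_mul_pow {A B : ℝ} (hA : 0 ≤ A) (hB : 0 < B) {m : ℕ}
    (h : 1 ≤ A ^ 2 * B ^ (2 * m)) : 1 / B ^ (m + 1) ≤ A / B := by
  have h' : 1 ≤ A * B ^ m := by
    rw [pow_mul', ← mul_pow] at h
    exact (one_le_sq_iff₀ (by positivity)).mp h
  rw [div_le_div_iff₀ (by positivity) hB, pow_succ]
  nlinarith

theorem granular_lower_bound_odd_prime_general
    (p : ℕ) (hp : p.Prime) (hodd : Odd p) (k : ℕ)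
    (g : Polynomial ℤ)
    (hg : Polynomial.aeval (Complex.exp (2 * Real.pi * Complex.I / p)) g ≠ 0)
    (h1 : (∑ i ∈ g.support, |g.coeff i|) ≤ (p : ℤ) ^ k) :
    ‖Polynomial.aeval (Complex.exp (2 * Real.pi * Complex.I / p)) g‖ / (p : ℝ) ^ k
      ≥ 1 / (p : ℝ) ^ (k * (p - 1) / 2) := by
  obtain ⟨m, hm⟩ : ∃ m, p = 2 * m + 3 := by
    obtain ⟨t, rfl⟩ := hodd
    exact ⟨t - 1, by have := hp.two_le; omega⟩
  have hS : ∑ i ∈ g.support, (|g.coeff i| : ℝ) ≤ (p : ℝ) ^ k := by exact_mod_cast h1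
  have hS0 : 0 ≤ ∑ i ∈ g.support, (|g.coeff i| : ℝ) := Finset.sum_nonneg fun i _ => abs_nonneg _
  have hnorm := (Complex.isPrimitiveRoot_exp p hp.ne_zero).one_le_norm_aeval_sq_mul_pow
    (by omega) hg
  rw [Nat.totient_prime hp, show p - 1 - 2 = 2 * m by omega] at hnorm
  have hnorm' := hnorm.trans
    (mul_le_mul_of_nonneg_left (pow_le_pow_left₀ hS0 hS _) (sq_nonneg _))
  rw [ge_iff_le, show p - 1 = 2 * (m + 1) by omega, mul_left_comm,
    Nat.mul_div_cancel_left _ two_pos, pow_mul]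
  exact one_div_pow_succ_le_div_of_one_le_sq_mul_pow (norm_nonneg _)
    (pow_pos (Nat.cast_pos.mpr hp.pos) k) hnorm'

theorem granular_lower_bound_odd_prime
    (p : ℕ) (hp : p.Prime) (hodd : Odd p) (k : ℕ) (hk : 0 < k)
    (g : Polynomial ℤ)
    (hg : Polynomial.aeval (Complex.exp (2 * Real.pi * Complex.I / p)) g ≠ 0)
    (h1 : (∑ i ∈ g.support, |g.coeff i|) ≤ (p : ℤ) ^ k) :
    ‖Polynomial.aeval (Complex.exp (2 * Real.pi * Complex.I / p)) g‖ / (p : ℝ) ^ k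
      ≥ 1 / (p : ℝ) ^ (k * (p - 1) / 2) :=
  granular_lower_bound_odd_prime_general p hp hodd k g hg h1
end

section
/- Let p be a prime, f : (ℤ/pℤ)^n → {−1,+1}, and r ∈ (ℤ/pℤ)^n with f̂(χ_r) ≠ 0. Then f̂(χ_{i·r}) ≠ 0 for every i ∈ {1, …, p−1}. Consequently the Fourier support of f is closed under multiplication of frequencies by nonzero scalars of ℤ/pℤ. -/
/-!
The Fourier coefficient at `i • r` is `u(ω ^ i) / p ^ n` for one polynomial `u` with rational
coefficients (the values of `f`). For `i` coprime to `p`, `ω ^ i` is again a primitive `p`-th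
root of unity, so it has the same minimal polynomial over `ℚ` (the `p`-th cyclotomic
polynomial) as `ω`, and `u` vanishes at `ω ^ i` exactly when it vanishes at `ω`.
-/

open Matrix

noncomputable def omega (p : ℕ) : ℂ := Complex.exp (2 * Real.pi * Complex.I / p)

noncomputable def chi (p : ℕ) {n : ℕ} (r x : Fin n → ZMod p) : ℂ :=
  omega p ^ (r ⬝ᵥ x).val

noncomputable def fhat (p : ℕ) {n : ℕ} [NeZero p]
    (f : (Fin n → ZMod p) → ℂ) (r : Fin n → ZMod p) : ℂ :=
  (1 / (p : ℂ) ^ n) * ∑ x, f x * (starRingEnd ℂ) (chi p r x)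

open Polynomial

theorem IsPrimitiveRoot.aeval_pow_eq_zero_iff {K : Type*} [Field K] [CharZero K] {ζ : K}
    {k : ℕ} (hζ : IsPrimitiveRoot ζ k) (hk : 0 < k) {i : ℕ} (hi : i.Coprime k) (u : ℚ[X]) :
    aeval (ζ ^ i) u = 0 ↔ aeval ζ u = 0 := by
  have hmin : minpoly ℚ (ζ ^ i) = minpoly ℚ ζ := by
    rw [← cyclotomic_eq_minpoly_rat (hζ.pow_of_coprime i hi) hk, cyclotomic_eq_minpoly_rat hζ hk]
  rw [← minpoly.dvd_iff, ← minpoly.dvd_iff, hmin]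

section Fourier

variable {p n : ℕ} [NeZero p]

theorem isPrimitiveRoot_omega : IsPrimitiveRoot (omega p) p :=
  Complex.isPrimitiveRoot_exp p (NeZero.ne p)

theorem omega_pow_val_natCast (k : ℕ) : omega p ^ (k : ZMod p).val = omega p ^ k := by
  rw [ZMod.val_natCast]
  nth_rw 2 [(isPrimitiveRoot_omega (p := p)).eq_orderOf]
  exact pow_mod_orderOf _ k

theorem conj_chi_natCast_smul (i : ℕ) (r x : Fin n → ZMod p) :
    starRingEnd ℂ (chi p ((i : ZMod p) • r) x) = (omega p ^ i) ^ (-(r ⬝ᵥ x)).val := by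
  have hnorm : ‖chi p ((i : ZMod p) • r) x‖ = 1 := by
    rw [chi, norm_pow, isPrimitiveRoot_omega.norm'_eq_one (NeZero.ne p), one_pow]
  rw [← Complex.inv_eq_conj hnorm]
  refine inv_eq_of_mul_eq_one_right ?_
  have hsum : ((((i : ZMod p) • r) ⬝ᵥ x).val + i * (-(r ⬝ᵥ x)).val : ℕ) = (0 : ZMod p) := by
    push_cast [ZMod.natCast_val, ZMod.cast_id', id_eq, smul_dotProduct, smul_eq_mul]
    ring
  rw [chi, ← pow_mul, ← pow_add, ← omega_pow_val_natCast, hsum, ZMod.val_zero, pow_zero]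

noncomputable def fourierPoly (c : (Fin n → ZMod p) → ℚ) (r : Fin n → ZMod p) : ℚ[X] :=
  ∑ x, C (c x) * X ^ (-(r ⬝ᵥ x)).val

theorem fhat_natCast_smul_eq_aeval (c : (Fin n → ZMod p) → ℚ) (r : Fin n → ZMod p) (i : ℕ) :
    fhat p (fun x => (c x : ℂ)) ((i : ZMod p) • r)
      = 1 / (p : ℂ) ^ n * aeval (omega p ^ i) (fourierPoly c r) := by
  simp only [fhat, fourierPoly, map_sum, map_mul, aeval_C, map_pow, aeval_X,
    conj_chi_natCast_smul, eq_ratCast]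

theorem fhat_natCast_smul_ne_zero (c : (Fin n → ZMod p) → ℚ) {r : Fin n → ZMod p}
    (hr : fhat p (fun x => (c x : ℂ)) r ≠ 0) {i : ℕ} (hi : i.Coprime p) :
    fhat p (fun x => (c x : ℂ)) ((i : ZMod p) • r) ≠ 0 := by
  have hr_eq := fhat_natCast_smul_eq_aeval c r 1
  rw [Nat.cast_one, one_smul, pow_one] at hr_eq
  rw [hr_eq, Ne, mul_eq_zero, not_or] at hr
  rw [fhat_natCast_smul_eq_aeval, Ne, mul_eq_zero, not_or,
    isPrimitiveRoot_omega.aeval_pow_eq_zero_iff (Nat.pos_of_neZero p) hi]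
  exact hr

end Fourier

theorem fourier_support_closed_under_scalar_mul
    (p n : ℕ) [NeZero p] (hp : p.Prime)
    (f : (Fin n → ZMod p) → ℂ) (hf : ∀ x, f x = 1 ∨ f x = -1)
    (r : Fin n → ZMod p) (hr : fhat p f r ≠ 0) :
    ∀ i : ℕ, 1 ≤ i → i ≤ p - 1 → fhat p f ((i : ZMod p) • r) ≠ 0 := by
  intro i hi1 hi2
  have hf_rat : ∀ x, ∃ q : ℚ, (q : ℂ) = f x := fun x => by
    rcases hf x with h | h
    exacts [⟨1, by simp [h]⟩, ⟨-1, by simp [h]⟩]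
  choose c hc using hf_rat
  have hcop : i.Coprime p :=
    (hp.coprime_iff_not_dvd.mpr (Nat.not_dvd_of_pos_of_lt hi1 (by omega))).symm
  rw [← funext hc] at hr ⊢
  exact fhat_natCast_smul_ne_zero c hr hcop
end

section
/- Let p be a prime and f : (ℤ/pℤ)^n → {−1,+1} a function whose Fourier support contains a nonzero frequency. Then the Fourier sparsity of f satisfies s_f ≥ p − 1. -/
open Matrix

/-- Reindexing a sum over `ZMod p` as a sum over `range p`. -/
lemma zmod_sum_eq (p : ℕ) [NeZero p] (g : ZMod p → ℂ) :
    ∑ k : ZMod p, g k = ∑ j ∈ Finset.range p, g j := by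
  exact Finset.sum_nbij' (fun k : ZMod p => k.val) (fun j : ℕ => (j : ZMod p))
    (fun a _ => Finset.mem_range.mpr (ZMod.val_lt a))
    (fun b _ => Finset.mem_univ _)
    (fun a _ => ZMod.natCast_rightInverse a)
    (fun b hb => ZMod.val_cast_of_lt (Finset.mem_range.mp hb))
    (fun a _ => congrArg g (ZMod.natCast_rightInverse a).symm)

/-- Key lemma: an integer combination of powers of a primitive `p`-th root of unity
vanishes iff all coefficients are equal. -/
lemma sum_zeta_eq_zero_iff (p : ℕ) (hp : p.Prime) [NeZero p] {ζ : ℂ}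
    (hζ : IsPrimitiveRoot ζ p) (N : ZMod p → ℤ) :
    (∑ k : ZMod p, (N k : ℂ) * ζ ^ (ZMod.val k)) = 0 ↔
      ∀ k, N k = N (((p - 1 : ℕ) : ZMod p)) := by
  have hp1 : 1 < p := hp.one_lt
  have hgeom : ∑ j ∈ Finset.range p, ζ ^ j = 0 := hζ.geom_sum_eq_zero hp1
  have hre : (∑ k : ZMod p, (N k : ℂ) * ζ ^ (ZMod.val k))
      = ∑ j ∈ Finset.range p, (N ((j : ℕ) : ZMod p) : ℂ) * ζ ^ j := by
    rw [zmod_sum_eq p (fun k => (N k : ℂ) * ζ ^ (ZMod.val k))]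
    refine Finset.sum_congr rfl fun j hj => by
      rw [ZMod.val_cast_of_lt (Finset.mem_range.mp hj)]
  set M : ℤ := N (((p - 1 : ℕ) : ZMod p)) with hM
  have hsplit : ∀ (h0 : (∑ k : ZMod p, (N k : ℂ) * ζ ^ (ZMod.val k)) = 0),
      ∑ j ∈ Finset.range (p - 1), ((N ((j : ℕ) : ZMod p) : ℂ) - (M : ℂ)) * ζ ^ j = 0 := by
    intro h0
    have hps : p - 1 + 1 = p := Nat.succ_pred_eq_of_pos hp.pos
    have h1 : ∑ j ∈ Finset.range p, ((N ((j : ℕ) : ZMod p) : ℂ) - (M : ℂ)) * ζ ^ j = 0 := by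
      have : ∑ j ∈ Finset.range p, ((N ((j : ℕ) : ZMod p) : ℂ) - (M : ℂ)) * ζ ^ j
          = (∑ j ∈ Finset.range p, (N ((j : ℕ) : ZMod p) : ℂ) * ζ ^ j)
            - (M : ℂ) * ∑ j ∈ Finset.range p, ζ ^ j := by
        rw [Finset.mul_sum, ← Finset.sum_sub_distrib]
        exact Finset.sum_congr rfl fun j _ => by ring
      rw [this, ← hre, h0, hgeom, mul_zero, sub_zero]
    have h2 : ∑ j ∈ Finset.range (p - 1 + 1), ((N ((j : ℕ) : ZMod p) : ℂ) - (M : ℂ)) * ζ ^ j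
        = 0 := by rw [hps]; exact h1
    rw [Finset.sum_range_succ] at h2
    simpa [hM] using h2
  constructor
  · intro h0
    have hQ0 := hsplit h0
    -- build rational polynomial
    set a : ℕ → ℚ := fun j => ((N ((j : ℕ) : ZMod p) : ℚ) - (M : ℚ)) with ha
    set Q : Polynomial ℚ := ∑ j ∈ Finset.range (p - 1), Polynomial.C (a j) * Polynomial.X ^ j
      with hQdef
    have haeval : Polynomial.aeval ζ Q = 0 := by
      rw [hQdef, map_sum]
      rw [← hQ0]
      refine Finset.sum_congr rfl fun j _ => ?_
      rw [_root_.map_mul, _root_.map_pow, Polynomial.aeval_X, Polynomial.aeval_C]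
      simp only [ha, _root_.map_sub, map_intCast]
    have hQeq : Q = 0 := by
      by_contra hQ
      have hdeg := minpoly.degree_le_of_ne_zero ℚ ζ hQ haeval
      have hmin : minpoly ℚ ζ = Polynomial.cyclotomic p ℚ :=
        (Polynomial.cyclotomic_eq_minpoly_rat hζ hp.pos).symm
      have hdegQ : Q.natDegree < p - 1 := by
        have : Q.natDegree ≤ p - 2 := by
          refine Polynomial.natDegree_sum_le_of_forall_le _ _ fun j hj => ?_
          refine le_trans (Polynomial.natDegree_C_mul_le _ _) ?_
          rw [Polynomial.natDegree_X_pow]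
          have := Finset.mem_range.mp hj
          omega
        omega
      have hdegmin : (minpoly ℚ ζ).natDegree = p - 1 := by
        rw [hmin, Polynomial.natDegree_cyclotomic, Nat.totient_prime hp]
      rw [Polynomial.degree_eq_natDegree (minpoly.ne_zero (hζ.isIntegral hp.pos).tower_top),
        Polynomial.degree_eq_natDegree hQ, Nat.cast_le, hdegmin] at hdeg
      omega
    have hcoeff : ∀ j < p - 1, a j = 0 := by
      intro j hj
      have := congrArg (fun q => Polynomial.coeff q j) hQeq
      simpa [hQdef, Polynomial.finset_sum_coeff, Polynomial.coeff_C_mul,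
        Polynomial.coeff_X_pow, Finset.sum_ite_eq', hj] using this
    intro k
    rcases lt_or_eq_of_le (Nat.lt_succ_iff.mp
      (by rw [Nat.succ_pred_eq_of_pos hp.pos]; exact ZMod.val_lt k)) with h | h
    · have h1 := sub_eq_zero.mp (by simpa [ha] using hcoeff k.val h)
      have h2 : N k = M := by exact_mod_cast h1
      exact h2
    · have hk : k = ((p - 1 : ℕ) : ZMod p) := by
        conv_lhs => rw [← ZMod.natCast_rightInverse k]
        rw [h]
        rfl
      rw [hk]
  · intro hall
    rw [hre]
    have : ∀ j ∈ Finset.range p, (N ((j : ℕ) : ZMod p) : ℂ) * ζ ^ j = (M : ℂ) * ζ ^ j :=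
      fun j _ => by rw [hall]
    rw [Finset.sum_congr rfl this, ← Finset.mul_sum, hgeom, mul_zero]

/-- The fiber sum of `g` over level sets of `r ⬝ᵥ ·`. -/
noncomputable def Nfib (p : ℕ) {n : ℕ} [NeZero p] (g : (Fin n → ZMod p) → ℤ)
    (r : Fin n → ZMod p) (k : ZMod p) : ℤ :=
  ∑ x ∈ Finset.univ.filter (fun x => r ⬝ᵥ x = k), g x

lemma fhat_eq_sum (p : ℕ) {n : ℕ} [NeZero p] (f : (Fin n → ZMod p) → ℂ)
    (g : (Fin n → ZMod p) → ℤ) (hfg : ∀ x, f x = (g x : ℂ)) (r : Fin n → ZMod p) :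
    fhat p f r = (1 / (p : ℂ) ^ n) *
      ∑ k : ZMod p, ((Nfib p g r k : ℤ) : ℂ) * ((starRingEnd ℂ) (omega p)) ^ (ZMod.val k) := by
  unfold fhat
  congr 1
  rw [← Finset.sum_fiberwise_of_maps_to (g := fun x => r ⬝ᵥ x)
    (fun x _ => Finset.mem_univ (r ⬝ᵥ x)) (fun x => f x * (starRingEnd ℂ) (chi p r x))]
  refine Finset.sum_congr rfl fun k _ => ?_
  unfold Nfib
  push_cast
  rw [Finset.sum_mul]
  refine Finset.sum_congr rfl fun x hx => ?_
  have hxk : r ⬝ᵥ x = k := (Finset.mem_filter.mp hx).2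
  rw [hfg x, chi, hxk, map_pow]

lemma fhat_eq_zero_iff (p : ℕ) {n : ℕ} [NeZero p] (hp : p.Prime)
    (f : (Fin n → ZMod p) → ℂ) (g : (Fin n → ZMod p) → ℤ)
    (hfg : ∀ x, f x = (g x : ℂ)) (r : Fin n → ZMod p) :
    fhat p f r = 0 ↔ ∀ k l : ZMod p, Nfib p g r k = Nfib p g r l := by
  have hζ : IsPrimitiveRoot ((starRingEnd ℂ) (omega p)) p :=
    (Complex.isPrimitiveRoot_exp p (NeZero.ne p)).map_of_injective (RingHom.injective _)
  rw [fhat_eq_sum p f g hfg r, mul_eq_zero]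
  have hpn : (1 / (p : ℂ) ^ n) ≠ 0 :=
    one_div_ne_zero (pow_ne_zero _ (Nat.cast_ne_zero.mpr hp.ne_zero))
  constructor
  · rintro (h | h)
    · exact absurd h hpn
    · have := (sum_zeta_eq_zero_iff p hp hζ (Nfib p g r)).mp h
      intro k l
      rw [this k, this l]
  · intro h
    right
    exact (sum_zeta_eq_zero_iff p hp hζ (Nfib p g r)).mpr fun k => h k _

lemma nfib_smul (p : ℕ) {n : ℕ} [NeZero p] (g : (Fin n → ZMod p) → ℤ)
    (r : Fin n → ZMod p) (c : (ZMod p)ˣ) (k : ZMod p) :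
    Nfib p g ((c : ZMod p) • r) k = Nfib p g r ((c⁻¹ : (ZMod p)ˣ) * k) := by
  unfold Nfib
  refine Finset.sum_congr ?_ fun _ _ => rfl
  ext x
  simp only [Finset.mem_filter, Finset.mem_univ, true_and, smul_dotProduct,
    smul_eq_mul]
  constructor
  · intro h
    rw [← h, ← mul_assoc, Units.inv_mul, one_mul]
  · intro h
    rw [h, ← mul_assoc, Units.mul_inv, one_mul]

theorem sparsity_ge_p_sub_one
    (p n : ℕ) [NeZero p] (hp : p.Prime)
    (f : (Fin n → ZMod p) → ℂ) (hf : ∀ x, f x = 1 ∨ f x = -1)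
    (hsupp : ∃ r : Fin n → ZMod p, r ≠ 0 ∧ fhat p f r ≠ 0) :
    p - 1 ≤ Nat.card {r : Fin n → ZMod p // fhat p f r ≠ 0} := by
  classical
  haveI := Fact.mk hp
  obtain ⟨r, hr0, hrne⟩ := hsupp
  set g : (Fin n → ZMod p) → ℤ := fun x => if f x = 1 then 1 else -1 with hg
  have hfg : ∀ x, f x = (g x : ℂ) := by
    intro x
    rcases hf x with h | h
    · simp [hg, h]
    · have h1 : f x ≠ 1 := by rw [h]; intro hc; norm_num at hc
      rw [hg]
      simp only [if_neg h1]
      rw [h]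
      norm_num
  have key : ∀ c : (ZMod p)ˣ, fhat p f ((c : ZMod p) • r) ≠ 0 := by
    intro c hc
    apply hrne
    rw [fhat_eq_zero_iff p hp f g hfg]
    have hc' := (fhat_eq_zero_iff p hp f g hfg _).mp hc
    intro k l
    have h1 := hc' (((c : ZMod p)) * k) (((c : ZMod p)) * l)
    rwa [nfib_smul, nfib_smul, Units.inv_mul_cancel_left, Units.inv_mul_cancel_left] at h1
  have hinj : Function.Injective (fun c : (ZMod p)ˣ =>
      (⟨(c : ZMod p) • r, key c⟩ : {r : Fin n → ZMod p // fhat p f r ≠ 0})) := by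
    intro c c' hcc
    have h2 : (c : ZMod p) • r = (c' : ZMod p) • r := congrArg Subtype.val hcc
    obtain ⟨i, hi⟩ := Function.ne_iff.mp hr0
    have hi' : r i ≠ 0 := by simpa using hi
    have h3 : (c : ZMod p) * r i = (c' : ZMod p) * r i := by
      have := congrFun h2 i
      simpa [smul_eq_mul] using this
    exact Units.ext (mul_right_cancel₀ hi' h3)
  have hcard := Nat.card_le_card_of_injective _ hinj
  rwa [Nat.card_eq_fintype_card, ZMod.card_units_eq_totient, Nat.totient_prime hp] at hcard
end
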